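/- Let W be a type, S a subset of W, and f, g : W → [0,1]. Then ((⨆_{w ∈ S} f w) ⇒ (⨅_{w ∈ S} g w)) ≤ ⨅_{w ∈ S} (f w ⇒ g w). (This is soundness of the Fischer Servi axiom (FS2): (◇φ → □ψ) → □(φ → ψ) at any world of any crisp Gödel-Kripke model.) -/
import Mathlib


open unitInterval

instance : Fact ((0:ℝ) ≤ 1) := ⟨zero_le_one⟩

noncomputable instance : CompleteLattice unitInterval := Set.Icc.completeLattice

/-- Gödel implication on the unit interval. -/
noncomputable def gimp (a b : unitInterval) : unitInterval := if a ≤ b then 1 else b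

infixr:60 " ⇒ " => gimp

/-- Gödel negation on the unit interval. -/
noncomputable def gneg (a : unitInterval) : unitInterval := a ⇒ 0

theorem soundness_FS2 {W : Type*} (S : Set W) (f g : W → unitInterval) :
    (((⨆ w ∈ S, f w) ⇒ (⨅ w ∈ S, g w))) ≤ ⨅ w ∈ S, (f w ⇒ g w) := by
  refine le_iInf fun w => le_iInf fun hw => ?_
  unfold gimp
  by_cases h2 : f w ≤ g w
  · simp [h2, le_one']
  · simp only [h2, if_false]
    split_ifs with h1
    · push_neg at h2
      exact absurd ((le_biSup f hw).trans (h1.trans (biInf_le g hw))) (not_le.mpr h2)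
    · exact biInf_le g hw
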